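/- Let T be an essentially small triangulated category, K a thick subcategory, and F : T → T/K the quotient functor. Then the induced map ᵃF : Spec△(T/K) → Spec△(T), Q ↦ F^{-1}(Q), is injective and continuous with image {P ∈ Spec△(T) | K ⊆ P}, and satisfies (ᵃF)^{-1}(Supp△(M)) = Supp△(F(M)) for every object M of T; it is a topological embedding onto its image. -/

import Mathlib

open CategoryTheory Limits Pretriangulated

universe v u

variable (C : Type u) [Category.{v} C] [Preadditive C] [HasZeroObject C]
  [HasShift C ℤ] [∀ n : ℤ, (shiftFunctor C n).Additive] [Pretriangulated C]

/-- A thick subcategory of a (pre)triangulated category, modelled as a set of objects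
closed under isomorphisms, zero objects, shifts, extensions and direct summands. -/
structure ThickSubcat : Type (max u v) where
  set : Set C
  mem_of_iso : ∀ {X Y : C}, (X ≅ Y) → X ∈ set → Y ∈ set
  zero_mem : ∀ Z : C, IsZero Z → Z ∈ set
  shift_mem : ∀ (X : C) (n : ℤ), X ∈ set → X⟦n⟧ ∈ set
  ext_mem : ∀ T : Triangle C, T ∈ (distTriang C) → T.obj₁ ∈ set → T.obj₃ ∈ set → T.obj₂ ∈ set
  summand_mem : ∀ (X Y : C) (i : Y ⟶ X) (r : X ⟶ Y), i ≫ r = 𝟙 Y → X ∈ set → Y ∈ set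

lemma ThickSubcat.set_injective : Function.Injective (ThickSubcat.set (C := C)) := by
  rintro ⟨s, _, _, _, _, _⟩ ⟨t, _, _, _, _, _⟩ h
  cases h; rfl

instance : PartialOrder (ThickSubcat C) :=
  PartialOrder.lift ThickSubcat.set (ThickSubcat.set_injective C)

/-- A thick subcategory `P` is *prime* if there is a unique minimal element among the
thick subcategories properly containing `P`. -/
def IsPrimeThick (P : ThickSubcat C) : Prop :=
  ∃! X : ThickSubcat C, Minimal (fun Y : ThickSubcat C => P < Y) X

/-- The spectrum: the set of prime thick subcategories. -/
def SpecTri := {P : ThickSubcat C // IsPrimeThick C P}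

/-- The support of an object `M`. -/
def suppObj (M : C) : Set (SpecTri C) := {P | M ∉ P.1.set}

/-- The topology on the spectrum, with closed basis the supports `suppObj M`. -/
instance : TopologicalSpace (SpecTri C) :=
  TopologicalSpace.generateFrom {U | ∃ M : C, U = (suppObj C M)ᶜ}

/-- The class of morphisms of `C` whose cone lies in the thick subcategory `K`. -/
def coneInK (K : ThickSubcat C) : MorphismProperty C :=
  fun X Y f => ∃ (Z : C) (g : Y ⟶ Z) (h : Z ⟶ X⟦(1 : ℤ)⟧),
    Triangle.mk f g h ∈ (distTriang C) ∧ Z ∈ K.set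

/-!
Let `W` be the class of morphisms with cone in `K`. Without the octahedral axiom `W` need not be
closed under composition, but its multiplicative closure `W̄` still admits a calculus of left
fractions (the Ore and cancellation conditions can be checked one cone at a time), and `F` is also
a localization at `W̄`. The key consequence is that `F X ≅ 0` only if `X ∈ K`: a morphism of `W̄`
that factors through an object of `K` has its source in `K`. Hence, for thick `P ⊇ K`,
`F A ≅ F B` and `B ∈ P` force `A ∈ P`, so taking essential images and `Q ↦ F⁻¹ Q` are inverse order
isomorphisms between thick subcategories of `C` containing `K` and thick subcategories of `D`.
Primality only depends on the order above `P`, so `Spec△ D` is identified with the primes containing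
`K`. Finally `F⁻¹` pulls `Supp△ M` back to `Supp△ (F M)`, and since `F` is essentially surjective
every basic closed set of `Spec△ D` is of this form, so the topology of `Spec△ D` is induced.
-/

theorem OrderIso.existsUnique_minimal_lt_iff {α β : Type*} [Preorder α] [Preorder β]
    (e : α ≃o β) (a : α) : (∃! y, Minimal (e a < ·) y) ↔ ∃! x, Minimal (a < ·) x := by
  rw [← e.toEquiv.existsUnique_congr_right]
  refine existsUnique_congr fun x => ?_
  simp only [Minimal, RelIso.coe_fn_toEquiv, e.lt_iff_lt, e.le_iff_le, e.surjective.forall]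

theorem IsUpperSet.existsUnique_minimal_lt_iff {α : Type*} [Preorder α] {s : Set α}
    (hs : IsUpperSet s) (a : s) : (∃! y : s, Minimal (a < ·) y) ↔ ∃! x, Minimal (a.1 < ·) x := by
  have mem : ∀ {x}, a.1 < x → x ∈ s := fun h => hs h.le a.2
  have key : ∀ y : s, Minimal (a < ·) y ↔ Minimal (a.1 < ·) y.1 := fun y =>
    ⟨fun h => ⟨h.1, fun z hz hzy => h.2 (y := ⟨z, mem hz⟩) hz hzy⟩,
      fun h => ⟨h.1, fun z hz hzy => h.2 hz hzy⟩⟩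
  constructor
  · rintro ⟨y, hy, huniq⟩
    exact ⟨y, (key y).1 hy, fun x hx => congrArg Subtype.val (huniq ⟨x, mem hx.1⟩ ((key _).2 hx))⟩
  · rintro ⟨x, hx, huniq⟩
    exact ⟨⟨x, mem hx.1⟩, (key _).2 hx, fun y hy => Subtype.ext (huniq y ((key y).1 hy))⟩

lemma suppObj_eq_of_iso {M N : C} (e : M ≅ N) : suppObj C M = suppObj C N :=
  Set.ext fun P => not_congr ⟨P.1.mem_of_iso e, P.1.mem_of_iso e.symm⟩

open ZeroObject

namespace ThickSubcat

variable {C} (P : ThickSubcat C)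

lemma mem_obj₁ {T : Triangle C} (hT : T ∈ distTriang C) (h₂ : T.obj₂ ∈ P.set)
    (h₃ : T.obj₃ ∈ P.set) : T.obj₁ ∈ P.set :=
  P.ext_mem T.invRotate (inv_rot_of_distTriang T hT) (P.shift_mem _ _ h₃) h₂

lemma mem_obj₃ {T : Triangle C} (hT : T ∈ distTriang C) (h₁ : T.obj₁ ∈ P.set)
    (h₂ : T.obj₂ ∈ P.set) : T.obj₃ ∈ P.set :=
  P.ext_mem T.rotate (rot_of_distTriang T hT) h₂ (P.shift_mem _ _ h₁)

lemma biprod_mem {X Y : C} (hX : X ∈ P.set) (hY : Y ∈ P.set) : (X ⊞ Y) ∈ P.set :=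
  P.ext_mem _ (binaryBiproductTriangle_distinguished X Y) hX hY

end ThickSubcat

namespace CategoryTheory.Functor.IsLocalization

lemma multiplicativeClosure {C D : Type*} [Category C] [Category D] (L : C ⥤ D)
    (W : MorphismProperty C) [L.IsLocalization W] :
    L.IsLocalization W.multiplicativeClosure :=
  of_equivalence_source L W L _ Equivalence.refl
    (fun _ _ f hf => MorphismProperty.le_isoClosure _ _ (.of f hf))
    ((W.multiplicativeClosure_le_iff ((MorphismProperty.isomorphisms D).inverseImage L)).2
      (Localization.inverts L W))
    L.leftUnitor

end CategoryTheory.Functor.IsLocalization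

section LeftCalculus

variable {C} {K : ThickSubcat C}

lemma exists_comp_eq_comp_of_coneInK {X' X Y : C} {s : X' ⟶ X} (hs : coneInK C K s)
    (u : X' ⟶ Y) : ∃ (Y' : C) (v : Y ⟶ Y') (x : X ⟶ Y'), coneInK C K v ∧ u ≫ v = s ≫ x := by
  obtain ⟨Z, g, h, hT, hZ⟩ := hs
  obtain ⟨Y', v, w, hT'⟩ := distinguished_cocone_triangle₂ (h ≫ u⟦(1 : ℤ)⟧')
  obtain ⟨x, hx, -⟩ :=
    complete_distinguished_triangle_morphism₂ _ _ hT hT' u (𝟙 Z) (Category.id_comp _).symm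
  exact ⟨Y', v, x, ⟨Z, w, _, hT', hZ⟩, hx.symm⟩

lemma exists_comp_eq_zero_of_coneInK {X' X Y : C} {s : X' ⟶ X} (hs : coneInK C K s)
    {f : X ⟶ Y} (hf : s ≫ f = 0) :
    ∃ (Y' : C) (t : Y ⟶ Y'), coneInK C K t ∧ f ≫ t = 0 := by
  obtain ⟨Z, g, h, hT, hZ⟩ := hs
  obtain ⟨q, rfl⟩ : ∃ q : Z ⟶ Y, f = g ≫ q := Triangle.yoneda_exact₂ _ hT f hf
  obtain ⟨Y', r, t, hT'⟩ := distinguished_cocone_triangle q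
  refine ⟨Y', r, ⟨Z⟦(1 : ℤ)⟧, t, -q⟦(1 : ℤ)⟧', rot_of_distTriang _ hT',
    K.shift_mem _ _ hZ⟩, ?_⟩
  rw [Category.assoc, show q ≫ r = 0 from comp_distTriang_mor_zero₁₂ _ hT', comp_zero]

lemma exists_comp_eq_comp_of_multiplicativeClosure {X' X : C} {s : X' ⟶ X}
    (hs : (coneInK C K).multiplicativeClosure s) {Y : C} (u : X' ⟶ Y) :
    ∃ (Y' : C) (v : Y ⟶ Y') (x : X ⟶ Y'),
      (coneInK C K).multiplicativeClosure v ∧ u ≫ v = s ≫ x := by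
  induction hs generalizing Y with
  | of s hs =>
    obtain ⟨Y', v, x, hv, h⟩ := exists_comp_eq_comp_of_coneInK hs u
    exact ⟨Y', v, x, .of v hv, h⟩
  | id => exact ⟨_, 𝟙 _, u, .id _, by simp⟩
  | comp_of s w _ hw ih =>
    obtain ⟨Y₁, v₁, x₁, hv₁, h₁⟩ := ih u
    obtain ⟨Y₂, v₂, x₂, hv₂, h₂⟩ := exists_comp_eq_comp_of_coneInK hw x₁
    exact ⟨Y₂, v₁ ≫ v₂, x₂, .comp_of _ _ hv₁ hv₂, by simp [reassoc_of% h₁, h₂]⟩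

lemma exists_comp_eq_zero_of_multiplicativeClosure {X' X : C} {s : X' ⟶ X}
    (hs : (coneInK C K).multiplicativeClosure s) {Y : C} {f : X ⟶ Y} (hf : s ≫ f = 0) :
    ∃ (Y' : C) (t : Y ⟶ Y'), (coneInK C K).multiplicativeClosure t ∧ f ≫ t = 0 := by
  induction hs generalizing Y with
  | of s hs =>
    obtain ⟨Y', t, ht, h⟩ := exists_comp_eq_zero_of_coneInK hs hf
    exact ⟨Y', t, .of t ht, h⟩
  | id => exact ⟨_, 𝟙 _, .id _, by simpa using hf⟩
  | comp_of s w _ hw ih =>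
    obtain ⟨Y₁, t₁, ht₁, h₁⟩ := ih (f := w ≫ f) (by simpa using hf)
    obtain ⟨Y₂, t₂, ht₂, h₂⟩ := exists_comp_eq_zero_of_coneInK hw (f := f ≫ t₁) (by simpa using h₁)
    exact ⟨Y₂, t₁ ≫ t₂, .comp_of _ _ ht₁ ht₂, by simpa using h₂⟩

instance (K : ThickSubcat C) : (coneInK C K).multiplicativeClosure.HasLeftCalculusOfFractions where
  exists_leftFraction _ _ φ := by
    obtain ⟨Y', v, x, hv, h⟩ := exists_comp_eq_comp_of_multiplicativeClosure φ.hs φ.f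
    exact ⟨.mk x v hv, h⟩
  ext _ _ _ f₁ f₂ s hs h := by
    obtain ⟨Y', t, ht, h'⟩ := exists_comp_eq_zero_of_multiplicativeClosure hs
      (f := f₁ - f₂) (by rw [Preadditive.comp_sub, h, sub_self])
    exact ⟨Y', t, ht, sub_eq_zero.1 (by rwa [← Preadditive.sub_comp])⟩

end LeftCalculus

section ZeroObjects

variable {C} {K : ThickSubcat C}

lemma exists_factorization_of_comp_coneInK {A B X : C} {w : B ⟶ X} (hw : coneInK C K w)
    {f : A ⟶ B} {κ : C} (hκ : κ ∈ K.set) (a : A ⟶ κ) (b : κ ⟶ X) (hab : a ≫ b = f ≫ w) :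
    ∃ κ' ∈ K.set, ∃ (a' : A ⟶ κ') (b' : κ' ⟶ B), a' ≫ b' = f := by
  -- `a` factors through the fibre `κ' ∈ K` of `b ≫ u`; then `f` differs from a morphism through
  -- `κ'` by one killed by `w`, which factors through `Z⟦-1⟧`.
  obtain ⟨Z, u, v, hT, hZ⟩ := hw
  have hwu : w ≫ u = 0 := comp_distTriang_mor_zero₁₂ _ hT
  obtain ⟨κ', g, h, hT'⟩ := distinguished_cocone_triangle₁ (b ≫ u)
  have hκ' : κ' ∈ K.set := K.mem_obj₁ hT' hκ hZ
  obtain ⟨a', rfl⟩ : ∃ a' : A ⟶ κ', a = a' ≫ g :=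
    Triangle.coyoneda_exact₂ _ hT' a
      (show a ≫ b ≫ u = 0 by rw [← Category.assoc, hab, Category.assoc, hwu, comp_zero])
  obtain ⟨y, hy⟩ : ∃ y : κ' ⟶ B, g ≫ b = y ≫ w :=
    Triangle.coyoneda_exact₂ _ hT (g ≫ b)
      (show (g ≫ b) ≫ u = 0 by rw [Category.assoc]; exact comp_distTriang_mor_zero₁₂ _ hT')
  obtain ⟨z, hz⟩ := Triangle.coyoneda_exact₂ _ (inv_rot_of_distTriang _ hT) (f - a' ≫ y)
    (show (f - a' ≫ y) ≫ w = 0 by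
      rw [Preadditive.sub_comp, ← hab, Category.assoc, Category.assoc, ← hy, sub_self])
  refine ⟨κ' ⊞ Z⟦(-1 : ℤ)⟧, K.biprod_mem hκ' (K.shift_mem Z (-1) hZ),
    biprod.lift a' z, biprod.desc y (Triangle.mk w u v).invRotate.mor₁, ?_⟩
  exact biprod.lift_desc.trans ((congrArg (a' ≫ y + ·) hz.symm).trans (by abel))

lemma mem_of_multiplicativeClosure_of_comp_eq {A B : C} {s : A ⟶ B}
    (hs : (coneInK C K).multiplicativeClosure s) {κ : C} (hκ : κ ∈ K.set) (a : A ⟶ κ)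
    (b : κ ⟶ B) (hab : a ≫ b = s) : A ∈ K.set := by
  induction hs generalizing κ with
  | of w hw =>
    obtain ⟨κ', hκ', a', b', h⟩ :=
      exists_factorization_of_comp_coneInK hw hκ a b (hab.trans (Category.id_comp w).symm)
    exact K.summand_mem κ' _ a' b' h hκ'
  | id => exact K.summand_mem κ _ a b hab hκ
  | comp_of s w _ hw ih =>
    obtain ⟨κ', hκ', a', b', h⟩ := exists_factorization_of_comp_coneInK hw hκ a b hab
    exact ih hκ' a' b' h

lemma coneInK_zero_of_mem {X : C} (hX : X ∈ K.set) : coneInK C K (0 : X ⟶ 0) :=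
  ⟨X⟦(1 : ℤ)⟧, 0, -(𝟙 X)⟦(1 : ℤ)⟧', rot_of_distTriang _ (contractible_distinguished X),
    K.shift_mem X 1 hX⟩

variable {D : Type*} [Category D] [Preadditive D] [HasZeroObject D] [HasShift D ℤ]
  [∀ n : ℤ, (shiftFunctor D n).Additive] [Pretriangulated D]
  (F : C ⥤ D) [F.CommShift ℤ] [F.IsTriangulated] [F.IsLocalization (coneInK C K)]

include K in
lemma isZero_obj_iff_mem {X : C} : IsZero (F.obj X) ↔ X ∈ K.set := by
  have := Functor.IsLocalization.multiplicativeClosure F (coneInK C K)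
  constructor
  · intro hX
    obtain ⟨Z, s, hs, h⟩ := (MorphismProperty.map_eq_iff_postcomp F
      (coneInK C K).multiplicativeClosure (𝟙 X) 0).1 (hX.eq_of_src _ _)
    exact mem_of_multiplicativeClosure_of_comp_eq hs (K.zero_mem 0 (isZero_zero C)) 0 0
      (by simpa using h.symm)
  · intro hX
    have := Localization.inverts F (coneInK C K) _ (coneInK_zero_of_mem hX)
    exact (F.map_isZero (isZero_zero C)).of_iso (asIso (F.map (0 : X ⟶ 0)))

end ZeroObjects

section ThickSubcategories

variable {C}

lemma ThickSubcat.mem_iff_of_coneInK {K P : ThickSubcat C} (hKP : K ≤ P) {A B : C} {w : A ⟶ B}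
    (hw : coneInK C K w) : A ∈ P.set ↔ B ∈ P.set := by
  obtain ⟨Z, u, v, hT, hZ⟩ := hw
  exact ⟨fun h => P.ext_mem _ hT h (hKP hZ), fun h => P.mem_obj₁ hT h (hKP hZ)⟩

lemma ThickSubcat.mem_iff_of_multiplicativeClosure {K P : ThickSubcat C} (hKP : K ≤ P)
    {A B : C} {s : A ⟶ B} (hs : (coneInK C K).multiplicativeClosure s) :
    A ∈ P.set ↔ B ∈ P.set := by
  induction hs with
  | of w hw => exact mem_iff_of_coneInK hKP hw
  | id => exact Iff.rfl
  | comp_of _ w _ hw ih => exact ih.trans (mem_iff_of_coneInK hKP hw)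

variable {D : Type*} [Category D] [Preadditive D] [HasZeroObject D] [HasShift D ℤ]
  [∀ n : ℤ, (shiftFunctor D n).Additive] [Pretriangulated D]
  (F : C ⥤ D) [F.CommShift ℤ] [F.IsTriangulated]

namespace ThickSubcat

def comap (Q : ThickSubcat D) : ThickSubcat C where
  set := F.obj ⁻¹' Q.set
  mem_of_iso e h := Q.mem_of_iso (F.mapIso e) h
  zero_mem Z hZ := Q.zero_mem _ (F.map_isZero hZ)
  shift_mem X n h := Q.mem_of_iso ((F.commShiftIso n).app X).symm (Q.shift_mem _ n h)
  ext_mem T hT h₁ h₃ := Q.ext_mem _ (F.map_distinguished T hT) h₁ h₃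
  summand_mem X Y i r hir h := Q.summand_mem _ _ (F.map i) (F.map r)
    (by rw [← F.map_comp, hir, F.map_id]) h

lemma comap_mono : Monotone (comap F) := fun _ _ h _ hX => h hX

variable {K P : ThickSubcat C} [F.IsLocalization (coneInK C K)]

variable (K) in
lemma le_comap (Q : ThickSubcat D) : K ≤ comap F Q :=
  fun _ hX => Q.zero_mem _ ((isZero_obj_iff_mem F).2 hX)

lemma mem_of_iso_obj (hKP : K ≤ P) {A B : C} (e : F.obj A ≅ F.obj B) (hB : B ∈ P.set) :
    A ∈ P.set := by
  have := Functor.IsLocalization.multiplicativeClosure F (coneInK C K)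
  have hW := Localization.inverts F (coneInK C K).multiplicativeClosure
  obtain ⟨φ, hφ⟩ := Localization.exists_leftFraction F (coneInK C K).multiplicativeClosure e.hom
  have := hW _ φ.hs
  have : IsIso (F.map φ.f) := by
    rw [← φ.map_comp_map_s F hW, ← hφ]
    infer_instance
  obtain ⟨Z, g, h, hT⟩ := distinguished_cocone_triangle φ.f
  have hZ : Z ∈ K.set :=
    (isZero_obj_iff_mem F).1 (Triangle.isZero₃_of_isIso₁ _ (F.map_distinguished _ hT) this)
  exact P.mem_obj₁ hT ((mem_iff_of_multiplicativeClosure hKP φ.hs).1 hB) (hKP hZ)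

lemma mem_of_isSplitMono_map (hKP : K ≤ P) {A B : C} (f : A ⟶ B) [IsSplitMono (F.map f)]
    (hB : B ∈ P.set) : A ∈ P.set := by
  obtain ⟨Z, g, h, hT⟩ := distinguished_cocone_triangle f
  have hFT := F.map_distinguished _ hT
  obtain ⟨e, -, -⟩ := exists_iso_binaryBiproduct_of_distTriang _ hFT
    (Triangle.mor₃_eq_zero_of_mono₁ _ hFT (inferInstanceAs (Mono (F.map f))))
  have : PreservesBinaryBiproducts F := preservesBinaryBiproducts_of_preservesBiproducts F
  have : (A ⊞ Z) ∈ P.set := mem_of_iso_obj F hKP (F.mapBiprod A Z ≪≫ e.symm) hB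
  exact P.summand_mem _ _ biprod.inl biprod.fst (by simp) this

variable (P) in
def map (hKP : K ≤ P) : ThickSubcat D where
  set := {Y | ∃ X ∈ P.set, Nonempty (F.obj X ≅ Y)}
  mem_of_iso e := fun ⟨X, hX, ⟨e'⟩⟩ => ⟨X, hX, ⟨e' ≪≫ e⟩⟩
  zero_mem Z hZ := ⟨0, P.zero_mem 0 (isZero_zero C), ⟨(F.map_isZero (isZero_zero C)).iso hZ⟩⟩
  shift_mem Y n := fun ⟨X, hX, ⟨e⟩⟩ =>
    ⟨X⟦n⟧, P.shift_mem X n hX, ⟨(F.commShiftIso n).app X ≪≫ (shiftFunctor D n).mapIso e⟩⟩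
  ext_mem T hT := by
    rintro ⟨X₁, hX₁, ⟨e₁⟩⟩ ⟨X₃, hX₃, ⟨e₃⟩⟩
    have := Functor.IsLocalization.multiplicativeClosure F (coneInK C K)
    have := Localization.essSurj_mapArrow F (coneInK C K).multiplicativeClosure
    obtain ⟨T₀, e, hT₀⟩ := (F.distTriang_iff T).1 hT
    refine ⟨T₀.obj₂, P.ext_mem T₀ hT₀ ?_ ?_, ⟨(Triangle.π₂.mapIso e).symm⟩⟩
    · exact mem_of_iso_obj F hKP ((Triangle.π₁.mapIso e).symm ≪≫ e₁.symm) hX₁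
    · exact mem_of_iso_obj F hKP ((Triangle.π₃.mapIso e).symm ≪≫ e₃.symm) hX₃
  summand_mem Y Y₀ i r hir := by
    rintro ⟨X, hX, ⟨e⟩⟩
    have := Functor.IsLocalization.multiplicativeClosure F (coneInK C K)
    have := Localization.essSurj_mapArrow F (coneInK C K).multiplicativeClosure
    obtain ⟨A, B, f, eA, eB, w⟩ : ∃ (A B : C) (f : A ⟶ B) (eA : F.obj A ≅ Y₀) (eB : F.obj B ≅ Y),
        F.map f ≫ eB.hom = eA.hom ≫ i :=
      let ε := F.mapArrow.objObjPreimageIso (Arrow.mk i)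
      ⟨_, _, _, Arrow.leftFunc.mapIso ε, Arrow.rightFunc.mapIso ε, ε.hom.w.symm⟩
    have : IsSplitMono (F.map f) := IsSplitMono.mk' ⟨eB.hom ≫ r ≫ eA.inv, by
      rw [reassoc_of% w, reassoc_of% hir, eA.hom_inv_id]⟩
    exact ⟨A, mem_of_isSplitMono_map F hKP f (mem_of_iso_obj F hKP (eB ≪≫ e.symm) hX), ⟨eA⟩⟩

lemma mem_map_iff (hKP : K ≤ P) {X : C} : F.obj X ∈ (map F P hKP).set ↔ X ∈ P.set :=
  ⟨fun ⟨_, hX', ⟨e⟩⟩ => mem_of_iso_obj F hKP e.symm hX', fun hX => ⟨X, hX, ⟨Iso.refl _⟩⟩⟩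

lemma comap_map (hKP : K ≤ P) : comap F (map F P hKP) = P :=
  ThickSubcat.set_injective C (Set.ext fun _ => mem_map_iff F hKP)

include K in
lemma map_comap (Q : ThickSubcat D) : map F (comap F Q) (le_comap F K Q) = Q := by
  have := Localization.essSurj F (coneInK C K)
  refine ThickSubcat.set_injective D (Set.ext fun Y => ⟨?_, fun hY => ?_⟩)
  · rintro ⟨X, hX, ⟨e⟩⟩
    exact Q.mem_of_iso e hX
  · exact ⟨_, Q.mem_of_iso (F.objObjPreimageIso Y).symm hY, ⟨F.objObjPreimageIso Y⟩⟩

variable (K) in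
def iciOrderIso : Set.Ici K ≃o ThickSubcat D where
  toFun P := map F P.1 P.2
  invFun Q := ⟨comap F Q, le_comap F K Q⟩
  left_inv P := Subtype.ext (comap_map F P.2)
  right_inv := map_comap F
  map_rel_iff' {P₁ P₂} := by
    change map F P₁.1 P₁.2 ≤ map F P₂.1 P₂.2 ↔ P₁.1 ≤ P₂.1
    refine ⟨fun h => ?_, fun h Y ⟨X, hX, e⟩ => ⟨X, h hX, e⟩⟩
    exact (comap_map F P₁.2).ge.trans ((comap_mono F h).trans (comap_map F P₂.2).le)

variable (K) in
include K in
lemma isPrimeThick_comap_iff (Q : ThickSubcat D) :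
    IsPrimeThick C (comap F Q) ↔ IsPrimeThick D Q := by
  calc IsPrimeThick C (comap F Q)
      ↔ ∃! P : Set.Ici K, Minimal ((iciOrderIso F K).symm Q < ·) P :=
        ((isUpperSet_Ici K).existsUnique_minimal_lt_iff ((iciOrderIso F K).symm Q)).symm
    _ ↔ ∃! Q', Minimal (iciOrderIso F K ((iciOrderIso F K).symm Q) < ·) Q' :=
        ((iciOrderIso F K).existsUnique_minimal_lt_iff _).symm
    _ ↔ IsPrimeThick D Q := by rw [OrderIso.apply_symm_apply]; rfl

end ThickSubcat

end ThickSubcategories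

namespace SpecTri

variable {C} {D : Type*} [Category D] [Preadditive D] [HasZeroObject D] [HasShift D ℤ]
  [∀ n : ℤ, (shiftFunctor D n).Additive] [Pretriangulated D]
  (F : C ⥤ D) [F.CommShift ℤ] [F.IsTriangulated]
  (K : ThickSubcat C) [F.IsLocalization (coneInK C K)]

def comap (Q : SpecTri D) : SpecTri C :=
  ⟨ThickSubcat.comap F Q.1, (ThickSubcat.isPrimeThick_comap_iff F K Q.1).2 Q.2⟩

lemma comap_injective : Function.Injective (comap F K) := fun _ _ h =>
  Subtype.ext ((ThickSubcat.iciOrderIso F K).symm.injective (Subtype.ext (congrArg (·.1) h)))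

lemma range_comap : Set.range (comap F K) = {P | K ≤ P.1} := by
  ext P
  refine ⟨fun ⟨Q, hQ⟩ => hQ ▸ ThickSubcat.le_comap F K Q.1, fun hKP => ?_⟩
  have hP : IsPrimeThick D (ThickSubcat.map F P.1 hKP) := by
    rw [← ThickSubcat.isPrimeThick_comap_iff F K, ThickSubcat.comap_map]
    exact P.2
  exact ⟨⟨_, hP⟩, Subtype.ext (ThickSubcat.comap_map F hKP)⟩

lemma preimage_comap_suppObj (M : C) : comap F K ⁻¹' suppObj C M = suppObj D (F.obj M) := rfl

lemma isEmbedding_comap : Topology.IsEmbedding (comap F K) := by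
  have := Localization.essSurj F (coneInK C K)
  refine ⟨⟨?_⟩, comap_injective F K⟩
  change TopologicalSpace.generateFrom _ =
    TopologicalSpace.induced _ (TopologicalSpace.generateFrom _)
  rw [induced_generateFrom_eq]
  congr 1
  ext U
  constructor
  · rintro ⟨N, rfl⟩
    refine ⟨_, ⟨F.objPreimage N, rfl⟩, ?_⟩
    rw [Set.preimage_compl, preimage_comap_suppObj, suppObj_eq_of_iso D (F.objObjPreimageIso N)]
  · rintro ⟨V, ⟨M, rfl⟩, rfl⟩
    exact ⟨F.obj M, by rw [Set.preimage_compl, preimage_comap_suppObj]⟩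

end SpecTri

/-- Let `K` be a thick subcategory of `T` and `F : T → T/K` the Verdier quotient functor
(modelled as a localization at the morphisms with cone in `K`). Then the induced map
`ᵃF : Spec△(T/K) → Spec△(T)`, `Q ↦ F⁻¹(Q)`, is injective and continuous with image
`{P ∈ Spec△(T) | K ⊆ P}`, satisfies `(ᵃF)⁻¹(Supp△ M) = Supp△(F M)` for every object `M`
of `T`, and is a topological embedding onto its image. -/
theorem stmt19 (D : Type*) [Category D] [Preadditive D] [HasZeroObject D]
    [HasShift D ℤ] [∀ n : ℤ, (shiftFunctor D n).Additive] [Pretriangulated D]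
    (K : ThickSubcat C) (F : C ⥤ D) [F.CommShift ℤ] [F.IsTriangulated] [F.Additive]
    [F.IsLocalization (coneInK C K)] :
    ∃ g : SpecTri D → SpecTri C,
      (∀ Q : SpecTri D, (g Q).1.set = F.obj ⁻¹' Q.1.set) ∧
      Function.Injective g ∧
      Continuous g ∧
      Set.range g = {P : SpecTri C | K.set ⊆ P.1.set} ∧
      (∀ M : C, g ⁻¹' suppObj C M = suppObj D (F.obj M)) ∧
      Topology.IsEmbedding g :=
  ⟨SpecTri.comap F K, fun _ => rfl, SpecTri.comap_injective F K,
    (SpecTri.isEmbedding_comap F K).continuous, SpecTri.range_comap F K,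
    SpecTri.preimage_comap_suppObj F K, SpecTri.isEmbedding_comap F K⟩
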